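/- arXiv:math/9910039 — 2 statements merged into one kernel-verified Lean document; each statement's English description precedes it below -/
import Mathlib

section
/- Let a₁ > a₂ > ⋯ > aₙ be real numbers. Then the convex hull of the set of all permutations of the vector (a₁,…,aₙ) in ℝⁿ equals the set of points (x₁,…,xₙ) ∈ ℝⁿ such that x₁ + ⋯ + xₙ = a₁ + ⋯ + aₙ and x_{i₁} + ⋯ + x_{i_r} ≤ a₁ + ⋯ + a_r for all 1 ≤ i₁ < ⋯ < i_r ≤ n and 1 ≤ r ≤ n. -/
/-!
Both inclusions rest on one summation-by-parts inequality: if `d` is decreasing, every partial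
sum `y₁ + ⋯ + y_r` is at most `b₁ + ⋯ + b_r` and the totals agree, then `∑ dᵢ yᵢ ≤ ∑ dᵢ bᵢ`.
With `d = a` and `y`, `b` the indicators of an `r`-set and of `{1, …, r}`, it shows that every
permutation of `a` satisfies the inequalities, and these cut out a convex set. Conversely, for a
point `x` of that set and any linear functional `c`, sorting `c` decreasingly and applying the
inequality to `x` and `a` shows that `c x` is at most the value of `c` at some permutation of
`a`; by Hahn–Banach separation `x` lies in the convex hull of these finitely many points.
-/

open Finset

theorem sum_range_mul_le_of_partialSums_le {d y b : ℕ → ℝ} {n : ℕ}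
    (hd : ∀ i, i + 1 < n → d (i + 1) ≤ d i)
    (hyb : ∀ r < n, ∑ i ∈ range (r + 1), y i ≤ ∑ i ∈ range (r + 1), b i)
    (htot : ∑ i ∈ range n, y i = ∑ i ∈ range n, b i) :
    ∑ i ∈ range n, d i * y i ≤ ∑ i ∈ range n, d i * b i := by
  have by_parts (z : ℕ → ℝ) := sum_range_by_parts d z n
  simp only [smul_eq_mul] at by_parts
  rw [by_parts, by_parts, htot]
  refine sub_le_sub_left (sum_le_sum fun i hi => ?_) _
  rw [mem_range] at hi
  exact mul_le_mul_of_nonpos_left (hyb i (by omega)) (sub_nonpos.2 (hd i (by omega)))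

theorem Fin.sum_filter_val_lt_eq_sum_range {M : Type*} [AddCommMonoid M] {n r : ℕ} (hr : r ≤ n)
    (f : ℕ → M) : ∑ i : Fin n with i.val < r, f i = ∑ i ∈ range r, f i := by
  rw [sum_filter, Fin.sum_univ_eq_sum_range (fun i => if i < r then f i else 0), ← sum_filter]
  congr 1
  ext i
  simp only [mem_filter, mem_range]
  omega

theorem Fin.sum_mul_le_of_partialSums_le {n : ℕ} {d y b : Fin n → ℝ} (hd : Antitone d)
    (hyb : ∀ r ≤ n, ∑ i : Fin n with i.val < r, y i ≤ ∑ i : Fin n with i.val < r, b i)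
    (htot : ∑ i, y i = ∑ i, b i) :
    ∑ i, d i * y i ≤ ∑ i, d i * b i := by
  let pad (f : Fin n → ℝ) (i : ℕ) : ℝ := if h : i < n then f ⟨i, h⟩ else 0
  have pad_val (f : Fin n → ℝ) (i : Fin n) : pad f i = f i := by simp [pad]
  have sum_range_pad (f : Fin n → ℝ) {r : ℕ} (hr : r ≤ n) :
      ∑ i ∈ range r, pad f i = ∑ i : Fin n with i.val < r, f i := by
    simp only [← Fin.sum_filter_val_lt_eq_sum_range hr, pad_val]
  have sum_mul_pad (f g : Fin n → ℝ) : ∑ i, f i * g i = ∑ i ∈ range n, pad f i * pad g i := by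
    simp only [← Fin.sum_univ_eq_sum_range (fun i => pad f i * pad g i), pad_val]
  rw [sum_mul_pad, sum_mul_pad]
  refine sum_range_mul_le_of_partialSums_le (fun i hi => ?_) (fun r hr => ?_) ?_
  · simpa [pad, hi, (Nat.lt_succ_self i).trans hi] using hd (Fin.mk_le_mk.2 (Nat.le_succ i))
  · rw [sum_range_pad y hr, sum_range_pad b hr]
    exact hyb (r + 1) hr
  · rw [sum_range_pad y le_rfl, sum_range_pad b le_rfl]
    simpa using htot

theorem Antitone.sum_le_sum_filter_val_lt_card {n : ℕ} {a : Fin n → ℝ} (ha : Antitone a)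
    (T : Finset (Fin n)) : ∑ i ∈ T, a i ≤ ∑ i : Fin n with i.val < #T, a i := by
  -- The indicator of `T` is majorized by that of the initial segment of the same size.
  have hT : #T ≤ n := by simpa using card_le_univ T
  let ind (s : Finset (Fin n)) (i : Fin n) : ℝ := if i ∈ s then 1 else 0
  have sum_eq (s : Finset (Fin n)) : ∑ i ∈ s, a i = ∑ i, a i * ind s i := by
    simp [ind, mul_ite]
  have sum_ind (s : Finset (Fin n)) (r : ℕ) :
      ∑ i : Fin n with i.val < r, ind s i = #{i ∈ s | i.val < r} := by
    simp only [ind, sum_boole, filter_filter]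
    congr 2
    ext
    simp [and_comm]
  rw [sum_eq, sum_eq]
  refine Fin.sum_mul_le_of_partialSums_le ha (fun r hr => ?_) ?_
  · rw [sum_ind, sum_ind, filter_filter, Nat.cast_le]
    have h1 : #{i ∈ T | i.val < r} ≤ #T := card_le_card (filter_subset _ _)
    have h2 : #{i ∈ T | i.val < r} ≤ #{i : Fin n | i.val < r} :=
      card_le_card (filter_subset_filter _ (subset_univ T))
    have h3 : #{i : Fin n | i.val < #T ∧ i.val < r} = #{i : Fin n | i.val < min #T r} := by
      congr 1
      ext
      simp
    rw [h3, Fin.card_filter_val_lt] at *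
    omega
  · simp [ind, sum_boole, Fin.card_filter_val_lt, hT]

theorem exists_perm_dotProduct_le {n : ℕ} {a x : Fin n → ℝ} (hsum : ∑ i, x i = ∑ i, a i)
    (hx : ∀ S : Finset (Fin n), ∑ i ∈ S, x i ≤ ∑ i : Fin n with i.val < #S, a i)
    (c : Fin n → ℝ) : ∃ σ : Equiv.Perm (Fin n), c ⬝ᵥ x ≤ c ⬝ᵥ (a ∘ σ) := by
  -- `τ` sorts `c` decreasingly; the best vertex lists `a` in the same order.
  set τ := Tuple.sort (-c)
  have hcτ : Antitone (c ∘ τ) := fun i j hij => by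
    simpa using Tuple.monotone_sort (-c) hij
  refine ⟨τ.symm, ?_⟩
  have key := Fin.sum_mul_le_of_partialSums_le hcτ (y := x ∘ τ) (b := a) (fun r hr => ?_)
    ((Equiv.sum_comp τ x).trans hsum)
  · simpa [dotProduct, ← Equiv.sum_comp τ (fun i => c i * _)] using key
  · have hcard : #((univ.filter fun i : Fin n => i.val < r).map τ.toEmbedding) = r := by
      simp [Fin.card_filter_val_lt, hr]
    simpa [hcard, sum_map] using hx ((univ.filter fun i : Fin n => i.val < r).map τ.toEmbedding)

theorem mem_convexHull_of_forall_exists_dotProduct_le {ι : Type*} [Fintype ι] [DecidableEq ι]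
    {s : Set (ι → ℝ)} (hs : s.Finite) {x : ι → ℝ} (h : ∀ c : ι → ℝ, ∃ y ∈ s, c ⬝ᵥ x ≤ c ⬝ᵥ y) :
    x ∈ convexHull ℝ s := by
  by_contra hx
  obtain ⟨f, u, hfs, hux⟩ :=
    geometric_hahn_banach_closed_point (convex_convexHull ℝ s) (hs.isClosed_convexHull ℝ) hx
  set c : ι → ℝ := fun i => f fun j => if i = j then 1 else 0
  have hf (z : ι → ℝ) : f z = c ⬝ᵥ z := by
    rw [dotProduct_comm]
    exact LinearMap.pi_apply_eq_sum_univ f.toLinearMap z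
  obtain ⟨y, hy, hxy⟩ := h c
  have := hfs y (subset_convexHull ℝ s hy)
  rw [hf] at this hux
  linarith

theorem convex_setOf_sum_eq_and_forall_sum_le {ι : Type*} [Fintype ι] (s : ℝ)
    (t : Finset ι → ℝ) :
    Convex ℝ {x : ι → ℝ | ∑ i, x i = s ∧ ∀ S : Finset ι, ∑ i ∈ S, x i ≤ t S} := by
  intro u hu v hv p q hp hq hpq
  simp only [Set.mem_ofPred_eq, Pi.add_apply, Pi.smul_apply, smul_eq_mul, sum_add_distrib,
    ← mul_sum]
  refine ⟨by rw [hu.1, hv.1, ← add_mul, hpq, one_mul], fun S => ?_⟩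
  calc p * ∑ i ∈ S, u i + q * ∑ i ∈ S, v i ≤ p * t S + q * t S := by
        gcongr
        exacts [hu.2 S, hv.2 S]
    _ = t S := by rw [← add_mul, hpq, one_mul]

/-- Lemma 2.4 on permutahedra: the convex hull of the permutations of a strictly
decreasing vector `(a₁,…,aₙ)` is the set of `x` with total sum `∑ aᵢ` and all partial sums
over `r` distinct indices at most `a₁ + ⋯ + a_r`. -/
theorem statement3 (n : ℕ) (a : Fin n → ℝ) (ha : StrictAnti a) :
    convexHull ℝ {x : Fin n → ℝ | ∃ σ : Equiv.Perm (Fin n), x = a ∘ σ} =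
      {x : Fin n → ℝ | (∑ i, x i) = (∑ i, a i) ∧
        ∀ S : Finset (Fin n),
          ∑ i ∈ S, x i ≤ ∑ i ∈ Finset.univ.filter (fun j : Fin n => (j : ℕ) < S.card), a i} := by
  refine Set.Subset.antisymm
    (convexHull_min ?_ (convex_setOf_sum_eq_and_forall_sum_le _ _)) ?_
  · rintro _ ⟨σ, rfl⟩
    refine ⟨Equiv.sum_comp σ a, fun S => ?_⟩
    simpa [sum_map] using ha.antitone.sum_le_sum_filter_val_lt_card (S.map σ.toEmbedding)
  · rintro x ⟨hsum, hx⟩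
    have hfin : {x : Fin n → ℝ | ∃ σ : Equiv.Perm (Fin n), x = a ∘ σ}.Finite :=
      (Set.finite_range fun σ : Equiv.Perm (Fin n) => a ∘ σ).subset fun _ ⟨σ, h⟩ => ⟨σ, h.symm⟩
    refine mem_convexHull_of_forall_exists_dotProduct_le hfin fun c => ?_
    obtain ⟨σ, hσ⟩ := exists_perm_dotProduct_le hsum hx c
    exact ⟨a ∘ σ, ⟨σ, rfl⟩, hσ⟩
end

section
/- Let n ≥ 2 and 1 ≤ k < n/2. Let P = P(n,k) be the set of admissible tuples α having a bad index j with 1/2 < αᵢ < 1 for every good index i and k − n + 3/2 < αⱼ < k − n + 2, and let Q = Q(n,k) be the set of admissible tuples α with α_{i₁} + ⋯ + α_{i_r} < (n−2k+r)/2 for all 1 ≤ i₁ < ⋯ < i_r ≤ n and 1 ≤ r ≤ n. Then: (i) Q is contained in the convex hull of P; (ii) Q contains every good tuple; (iii) if α ∈ Q has bad index j, then there exists α̃ ∈ P with bad index j such that α̃ᵢ > αᵢ for all i ≠ j, and α lies in the convex hull of {α̃} together with the set of elements of Q whose bad index is not equal to j (including good tuples). -/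
open MeasureTheory Real Complex
open scoped FourierTransform ENNReal NNReal Classical
noncomputable section

def GammaSet (n : ℕ) : Set (Fin n → ℝ) := {ξ | ∑ i, ξ i = 0}

def gammaParam (n : ℕ) (η : Fin (n - 1) → ℝ) : Fin n → ℝ := fun i =>
  if h : (i : ℕ) < n - 1 then η ⟨i, h⟩ else -(∑ j, η j)

def Lam (n : ℕ) (m : (Fin n → ℝ) → ℂ) (f : Fin n → ℝ → ℂ) : ℂ :=
  ∫ η : Fin (n - 1) → ℝ, m (gammaParam n η) * ∏ i, 𝓕 (f i) (gammaParam n η i)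

def Tm (n : ℕ) (m : (Fin n → ℝ) → ℂ) (f : Fin (n - 1) → ℝ → ℂ) (x : ℝ) : ℂ :=
  ∫ η : Fin (n - 1) → ℝ, m (gammaParam n η) * (∏ i, 𝓕 (f i) (η i)) *
    Complex.exp (2 * Real.pi * Complex.I * x * (∑ i, η i))

def NonDegenerate (n k : ℕ) (Γ' : Submodule ℝ (Fin n → ℝ)) : Prop :=
  ∀ ι : Fin k → Fin n, StrictMono ι →
    Function.Bijective (fun (ξ : Γ') (s : Fin k) => (ξ : Fin n → ℝ) (ι s))

def SymbolEst (n : ℕ) (Γ' : Submodule ℝ (Fin n → ℝ)) (M : ℕ) (B : ℝ)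
    (m : (Fin n → ℝ) → ℂ) : Prop :=
  (∀ ξ ∈ GammaSet n, ‖m ξ‖ ≤ B) ∧
  ContDiffOn ℝ (M : ℕ∞) m ((Γ' : Set (Fin n → ℝ))ᶜ) ∧
  ∀ a : ℕ, a ≤ M → ∀ ξ ∈ ((Γ' : Set (Fin n → ℝ))ᶜ), ∀ v : Fin a → (Fin n → ℝ),
    (∀ s, v s ∈ GammaSet n) → (∀ s, ‖v s‖ ≤ 1) →
    ‖iteratedFDerivWithin ℝ a m ((Γ' : Set (Fin n → ℝ))ᶜ) ξ v‖ ≤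
      B / Metric.infDist ξ (Γ' : Set (Fin n → ℝ)) ^ a

def Admissible (n : ℕ) (a : Fin n → ℝ) : Prop :=
  (∀ i, a i < 1) ∧ ∑ i, a i = 1 ∧ ∀ i j, a i < 0 → a j < 0 → i = j

def RestrictedType (n : ℕ) (Λ : (Fin n → ℝ → ℂ) → ℂ) (a : Fin n → ℝ) (C : ℝ) : Prop :=
  ∀ E : Fin n → Set ℝ, (∀ i, MeasurableSet (E i)) → (∀ i, volume (E i) < ⊤) →
    ∃ E' : Fin n → Set ℝ, (∀ i, MeasurableSet (E' i)) ∧ (∀ i, E' i ⊆ E i) ∧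
      (∀ i, 0 ≤ a i → E' i = E i) ∧ (∀ i, volume (E i) ≤ 2 * volume (E' i)) ∧
      ∀ F : Fin n → ℝ → ℂ, (∀ i, Measurable (F i)) →
        (∀ i x, ‖F i x‖ ≤ 1) → (∀ i x, x ∉ E' i → F i x = 0) →
        ‖Λ F‖ ≤ C * ∏ i, (volume (E i)).toReal ^ a i

/-- The set `P` of bad admissible tuples of Theorem 2.3. -/
def Pset (n k : ℕ) : Set (Fin n → ℝ) :=
  {a | Admissible n a ∧ ∃ j, a j < 0 ∧ (∀ i, i ≠ j → 1 / 2 < a i) ∧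
    (k : ℝ) - n + 3 / 2 < a j ∧ a j < (k : ℝ) - n + 2}

/-- The set `Q` of admissible tuples satisfying the partial-sum constraints. -/
def Qset (n k : ℕ) : Set (Fin n → ℝ) :=
  {a | Admissible n a ∧ ∀ S : Finset (Fin n), S.Nonempty →
    ∑ i ∈ S, a i < ((n : ℝ) - 2 * k + S.card) / 2}

set_option maxHeartbeats 4000000

lemma isOpen_convexHull_aux {E : Type*} [AddCommGroup E] [Module ℝ E] [TopologicalSpace E]
    [IsTopologicalAddGroup E] [ContinuousSMul ℝ E] {U : Set E} (hU : IsOpen U) :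
    IsOpen (convexHull ℝ U) := by
  have hsub : convexHull ℝ U ⊆ interior (convexHull ℝ U) := by
    intro z hz
    classical
    have hUi : U ⊆ interior (convexHull ℝ U) :=
      interior_maximal (subset_convexHull ℝ U) hU
    rw [_root_.convexHull_eq] at hz
    obtain ⟨ι, t, w, x, hw0, hw1, hx, hcm⟩ := hz
    obtain ⟨i₀, hi₀t, hi₀pos⟩ : ∃ i ∈ t, 0 < w i := by
      by_contra h
      push_neg at h
      have : ∑ i ∈ t, w i ≤ 0 := Finset.sum_nonpos h
      rw [hw1] at this; linarith
    have hz' : z = ∑ i ∈ t, w i • x i := by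
      rw [← hcm, Finset.centerMass_eq_of_sum_1 _ _ hw1]
    have hsplit : z = w i₀ • x i₀ + ∑ i ∈ t.erase i₀, w i • x i := by
      rw [hz', ← Finset.add_sum_erase _ _ hi₀t]
    have hrest : ∑ i ∈ t.erase i₀, w i = 1 - w i₀ := by
      have := Finset.add_sum_erase _ w hi₀t
      rw [hw1] at this; linarith
    have hrest0 : (0:ℝ) ≤ 1 - w i₀ := by
      rw [← hrest]
      exact Finset.sum_nonneg (fun i hi => hw0 i (Finset.mem_of_mem_erase hi))
    rcases eq_or_lt_of_le hrest0 with heq | hlt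
    · -- w i₀ = 1, all other weights are 0
      have hall : ∀ i ∈ t.erase i₀, w i = 0 := by
        intro i hi
        have h0 : ∑ i ∈ t.erase i₀, w i = 0 := by linarith
        exact (Finset.sum_eq_zero_iff_of_nonneg
          (fun i hi => hw0 i (Finset.mem_of_mem_erase hi))).1 h0 i hi
      have : z = x i₀ := by
        have hw1' : w i₀ = 1 := by linarith
        rw [hsplit, Finset.sum_eq_zero (fun i hi => by rw [hall i hi, zero_smul]), add_zero,
          hw1', one_smul]
      rw [this]
      exact hUi (hx i₀ hi₀t)
    · set y := (t.erase i₀).centerMass w x with hy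
      have hyC : y ∈ convexHull ℝ U :=
        Finset.centerMass_mem_convexHull _ (fun i hi => hw0 i (Finset.mem_of_mem_erase hi))
          (by rw [hrest]; exact hlt) (fun i hi => hx i (Finset.mem_of_mem_erase hi))
      have hzy : z = w i₀ • x i₀ + (1 - w i₀) • y := by
        rw [hsplit, hy, Finset.centerMass, hrest, smul_inv_smul₀ (by linarith)]
      rw [hzy]
      exact (convex_convexHull ℝ U).combo_interior_closure_mem_interior
        (hUi (hx i₀ hi₀t)) (subset_closure hyC) hi₀pos (by linarith) (by ring)
  have : convexHull ℝ U = interior (convexHull ℝ U) :=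
    Set.Subset.antisymm hsub interior_subset
  rw [this]; exact isOpen_interior

lemma st4_good_mem_Q (n k : ℕ) (hk : 1 ≤ k) (hkn : 2 * k < n) (a : Fin n → ℝ)
    (ha : Admissible n a) (hpos : ∀ i, 0 ≤ a i) : a ∈ Qset n k := by
  have hcast : 2 * (k:ℝ) + 1 ≤ n := by exact_mod_cast hkn
  refine ⟨ha, fun S hS => ?_⟩
  have hsle : ∑ i ∈ S, a i ≤ 1 := by
    rw [← ha.2.1]
    exact Finset.sum_le_sum_of_subset_of_nonneg (Finset.subset_univ S)
      (fun i _ _ => hpos i)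
  rcases eq_or_lt_of_le (Nat.succ_le_of_lt hS.card_pos) with h1 | h2
  · obtain ⟨i, hi⟩ := Finset.card_eq_one.1 h1.symm
    rw [hi]
    simp only [Finset.sum_singleton, Finset.card_singleton, Nat.cast_one]
    have := ha.1 i
    linarith
  · have h2' : (2:ℝ) ≤ S.card := by exact_mod_cast h2
    linarith

lemma st4_part3 (n k : ℕ) (hk : 1 ≤ k) (hkn : 2 * k < n) {a : Fin n → ℝ}
    (ha : a ∈ Qset n k) (j : Fin n) (hj : a j < 0) :
    ∃ b ∈ Pset n k, b j < 0 ∧ (∀ i, i ≠ j → a i < b i) ∧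
      a ∈ convexHull ℝ (insert b {c ∈ Qset n k | 0 ≤ c j}) := by
  classical
  obtain ⟨⟨hlt1, hsum, _hneg⟩, hQ⟩ := ha
  have hkR : (1:ℝ) ≤ k := by exact_mod_cast hk
  have hknR : 2*(k:ℝ) + 1 ≤ n := by exact_mod_cast hkn
  have hn3 : 3 ≤ n := by omega
  have hcerase : ((Finset.univ.erase j).card : ℝ) = (n:ℝ) - 1 := by
    rw [Finset.card_erase_of_mem (Finset.mem_univ j), Finset.card_univ, Fintype.card_fin,
      Nat.cast_sub (by omega : 1 ≤ n)]
    norm_num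
  have herase_ne : (Finset.univ.erase j).Nonempty := by
    rw [← Finset.card_pos]
    rw [Finset.card_erase_of_mem (Finset.mem_univ j), Finset.card_univ, Fintype.card_fin]
    omega
  -- a j > T
  have haj : (k:ℝ) - n + 3/2 < a j := by
    have hQe := hQ _ herase_ne
    rw [Finset.sum_erase_eq_sub (Finset.mem_univ j), hsum, hcerase] at hQe
    linarith
  -- M bound
  have hMlt : (∑ i ∈ Finset.univ.erase j, max (a i) (1/2)) < (n:ℝ) - k - 1/2 := by
    have hsplit := Finset.sum_filter_add_sum_filter_not (Finset.univ.erase j)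
      (fun i => 1/2 < a i) (fun i => max (a i) (1/2))
    have h1 : ∑ i ∈ (Finset.univ.erase j).filter (fun i => 1/2 < a i), max (a i) (1/2)
        = ∑ i ∈ (Finset.univ.erase j).filter (fun i => 1/2 < a i), a i :=
      Finset.sum_congr rfl (fun i hi => max_eq_left (Finset.mem_filter.1 hi).2.le)
    have h2 : ∑ i ∈ (Finset.univ.erase j).filter (fun i => ¬ 1/2 < a i), max (a i) (1/2)
        = (((Finset.univ.erase j).filter (fun i => ¬ 1/2 < a i)).card : ℝ) * (1/2) := by
      rw [Finset.sum_congr rfl (fun i hi => max_eq_right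
        (le_of_not_gt (Finset.mem_filter.1 hi).2)), Finset.sum_const, nsmul_eq_mul]
    have hAsum : ∑ i ∈ (Finset.univ.erase j).filter (fun i => 1/2 < a i), a i
        < ((n:ℝ) - 2*k + ((Finset.univ.erase j).filter (fun i => 1/2 < a i)).card)/2 := by
      rcases ((Finset.univ.erase j).filter (fun i => 1/2 < a i)).eq_empty_or_nonempty
        with h | h
      · rw [h]; simp; linarith
      · exact hQ _ h
    have hcards : ((((Finset.univ.erase j).filter (fun i => 1/2 < a i)).card :ℝ))
        + ((((Finset.univ.erase j).filter (fun i => ¬ 1/2 < a i)).card):ℝ) = (n:ℝ) - 1 := by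
      rw [← Nat.cast_add, Finset.card_filter_add_card_filter_not]
      exact hcerase
    linarith
  obtain ⟨M, hM⟩ : ∃ x : ℝ, x = ∑ i ∈ Finset.univ.erase j, max (a i) (1/2) := ⟨_, rfl⟩
  rw [← hM] at hMlt
  obtain ⟨T, hT⟩ : ∃ x : ℝ, x = (k:ℝ) - n + 3/2 := ⟨_, rfl⟩
  rw [← hT] at haj
  have hT12 : T + 1/2 ≤ 0 := by rw [hT]; linarith
  obtain ⟨t, ht⟩ : ∃ x : ℝ, x = (T + min (T + 1/2) (min (1 - M) (a j)))/2 := ⟨_, rfl⟩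
  have htmin : T < min (T + 1/2) (min (1 - M) (a j)) := by
    refine lt_min (by linarith) (lt_min (by rw [hT]; linarith) haj)
  have ht1 : T < t := by rw [ht]; linarith
  have ht2 : t < T + 1/2 := by
    have h := min_le_left (T + 1/2) (min (1 - M) (a j))
    rw [ht]; linarith
  have ht3 : t < 1 - M := by
    have h := (min_le_right (T + 1/2) (min (1 - M) (a j))).trans
      (min_le_left (1 - M) (a j))
    rw [ht]; linarith
  have ht4 : t < a j := by
    have h := (min_le_right (T + 1/2) (min (1 - M) (a j))).trans
      (min_le_right (1 - M) (a j))
    rw [ht]; linarith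
  have htneg : t < 0 := by linarith
  have hcapsum_pos : 0 < (n:ℝ) - 1 - M := by linarith
  have hrpos : 0 < 1 - t - M := by linarith
  have hrlt : 1 - t - M < (n:ℝ) - 1 - M := by
    have h52 : (5:ℝ)/2 - n ≤ T := by rw [hT]; linarith
    linarith
  obtain ⟨b, hb⟩ : ∃ b : Fin n → ℝ, b = fun i =>
      if i = j then t
      else (max (a i) (1/2) + (1 - t - M) * (1 - max (a i) (1/2)) / ((n:ℝ) - 1 - M)) :=
    ⟨_, rfl⟩
  have hbj : b j = t := by rw [hb]; simp
  have hbi : ∀ i, i ≠ j →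
      b i = max (a i) (1/2) + (1 - t - M) * (1 - max (a i) (1/2)) / ((n:ℝ) - 1 - M) := by
    intro i hij; rw [hb]; simp [hij]
  have hcapi : ∀ i, 0 < 1 - max (a i) (1/2) := by
    intro i
    have : max (a i) (1/2) < 1 := max_lt (hlt1 i) (by norm_num)
    linarith
  have hbgt : ∀ i, i ≠ j → max (a i) (1/2) < b i := by
    intro i hij
    have hpos : 0 < (1 - t - M) * (1 - max (a i) (1/2)) / ((n:ℝ) - 1 - M) :=
      div_pos (mul_pos hrpos (hcapi i)) hcapsum_pos
    rw [hbi i hij]; linarith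
  have hbgt12 : ∀ i, i ≠ j → 1/2 < b i := fun i hij =>
    lt_of_le_of_lt (le_max_right _ _) (hbgt i hij)
  have hbgta : ∀ i, i ≠ j → a i < b i := fun i hij =>
    lt_of_le_of_lt (le_max_left _ _) (hbgt i hij)
  have hblt1 : ∀ i, b i < 1 := by
    intro i
    by_cases hij : i = j
    · rw [hij, hbj]; linarith
    · have hci := hcapi i
      have hdivlt : (1 - t - M) * (1 - max (a i) (1/2)) / ((n:ℝ) - 1 - M)
          < 1 - max (a i) (1/2) := by
        rw [div_lt_iff₀ hcapsum_pos]
        nlinarith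
      rw [hbi i hij]; linarith
  have hbsum : ∑ i, b i = 1 := by
    rw [← Finset.add_sum_erase _ b (Finset.mem_univ j), hbj]
    rw [Finset.sum_congr rfl (fun i hi => hbi i (Finset.ne_of_mem_erase hi)),
      Finset.sum_add_distrib]
    have h2 : ∑ i ∈ Finset.univ.erase j,
        (1 - t - M) * (1 - max (a i) (1/2)) / ((n:ℝ) - 1 - M) = 1 - t - M := by
      rw [← Finset.sum_div, ← Finset.mul_sum, Finset.sum_sub_distrib, Finset.sum_const,
        nsmul_eq_mul, mul_one, hcerase, ← hM]
      field_simp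
    rw [h2, ← hM]
    ring
  have hbP : b ∈ Pset n k := by
    refine ⟨⟨hblt1, hbsum, ?_⟩, j, by rw [hbj]; linarith, hbgt12, ?_, ?_⟩
    · intro i i' hi hi'
      have hi0 : i = j := by
        by_contra h
        exact absurd hi (not_lt.2 (by linarith [hbgt12 i h]))
      have hi0' : i' = j := by
        by_contra h
        exact absurd hi' (not_lt.2 (by linarith [hbgt12 i' h]))
      rw [hi0, hi0']
    · rw [hbj, ← hT]; exact ht1
    · rw [hbj]
      have : (k:ℝ) - n + 2 = T + 1/2 := by rw [hT]; ring
      rw [this]; exact ht2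
  -- the coefficient l
  obtain ⟨l, hl⟩ : ∃ x : ℝ, x = a j / t := ⟨_, rfl⟩
  have hl0 : 0 < l := hl ▸ div_pos_of_neg_of_neg hj htneg
  have hlt' : l * t = a j := by rw [hl]; exact div_mul_cancel₀ _ (ne_of_lt htneg)
  have hl1 : l < 1 := by nlinarith
  have h1l : 0 < 1 - l := by linarith
  obtain ⟨d, hd⟩ : ∃ d : Fin n → ℝ, d = fun i => (a i - l * b i)/(1 - l) := ⟨_, rfl⟩
  have hdi : ∀ i, d i = (a i - l * b i)/(1 - l) := fun i => by rw [hd]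
  have hd_j : d j = 0 := by
    rw [hdi j, hbj, hlt']; simp
  have hd_lt : ∀ i, i ≠ j → d i < a i := by
    intro i hij
    have hab := hbgta i hij
    rw [hdi i, div_lt_iff₀ h1l]
    nlinarith
  have hd_lt1 : ∀ i, d i < 1 := by
    intro i
    by_cases hij : i = j
    · rw [hij, hd_j]; norm_num
    · have hab := hbgta i hij
      have hb1 := hblt1 i
      have ha1 := hlt1 i
      rw [hdi i, div_lt_one h1l]
      nlinarith
  have hd_sum : ∑ i, d i = 1 := by
    rw [Finset.sum_congr rfl (fun i _ => hdi i), ← Finset.sum_div, Finset.sum_sub_distrib,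
      ← Finset.mul_sum, hsum, hbsum]
    field_simp
  have ha_comb : ∀ i, a i = l * b i + (1-l) * d i := by
    intro i
    rw [hdi i]
    field_simp
    ring
  have hd_q : ∀ S : Finset (Fin n), S.Nonempty →
      ∑ i ∈ S, d i < ((n:ℝ) - 2*k + S.card)/2 := by
    intro S hS
    by_cases hjS : j ∈ S
    · rcases (S.erase j).eq_empty_or_nonempty with he | he
      · have hSj : S = {j} := by
          apply Finset.eq_singleton_iff_unique_mem.2
          refine ⟨hjS, fun x hx => ?_⟩
          by_contra hne
          exact absurd (Finset.mem_erase.2 ⟨hne, hx⟩) (by rw [he]; simp)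
        rw [hSj]
        simp only [Finset.sum_singleton, Finset.card_singleton, Nat.cast_one, hd_j]
        linarith
      · have hsum_er : ∑ i ∈ S, d i = ∑ i ∈ S.erase j, d i := by
          rw [← Finset.add_sum_erase _ d hjS, hd_j, zero_add]
        have hlt : ∑ i ∈ S.erase j, d i < ∑ i ∈ S.erase j, a i :=
          Finset.sum_lt_sum_of_nonempty he (fun i hi => hd_lt i (Finset.ne_of_mem_erase hi))
        have hQe := hQ _ he
        have hcard : ((S.erase j).card : ℝ) = (S.card:ℝ) - 1 := by
          rw [Finset.card_erase_of_mem hjS,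
            Nat.cast_sub (by exact_mod_cast Finset.card_pos.2 hS : 1 ≤ S.card)]
          norm_num
        rw [hcard] at hQe
        rw [hsum_er]
        linarith
    · have hlt : ∑ i ∈ S, d i < ∑ i ∈ S, a i :=
        Finset.sum_lt_sum_of_nonempty hS
          (fun i hi => hd_lt i (by rintro rfl; exact hjS hi))
      linarith [hQ S hS]
  refine ⟨b, hbP, by rw [hbj]; linarith, hbgta, ?_⟩
  -- now the convex hull membership
  obtain ⟨N, hN⟩ : ∃ N : Finset (Fin n), N = Finset.univ.filter (fun i => d i < 0) :=
    ⟨_, rfl⟩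
  have hNmem : ∀ i, i ∈ N ↔ d i < 0 := by
    intro i; rw [hN]; simp
  have hjN : j ∉ N := by rw [hNmem, hd_j]; norm_num
  have hdnonneg : ∀ i, i ∉ N → 0 ≤ d i := by
    intro i hi
    by_contra h
    exact hi ((hNmem i).2 (lt_of_not_ge h))
  rcases N.eq_empty_or_nonempty with hNe | hNne
  · -- d itself is admissible
    have hdQ : d ∈ Qset n k := by
      refine ⟨⟨hd_lt1, hd_sum, fun i i' hi hi' => ?_⟩, hd_q⟩
      exfalso
      have : i ∈ N := (hNmem i).2 hi
      rw [hNe] at this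
      exact absurd this (Finset.notMem_empty i)
    have hdmem : d ∈ insert b {c | c ∈ Qset n k ∧ 0 ≤ c j} :=
      Set.mem_insert_of_mem _ ⟨hdQ, ge_of_eq hd_j⟩
    have hbmem : b ∈ insert b {c | c ∈ Qset n k ∧ 0 ≤ c j} := Set.mem_insert _ _
    have hseg : a ∈ segment ℝ b d := by
      refine ⟨l, 1-l, hl0.le, by linarith, by ring, ?_⟩
      funext i
      simp only [Pi.add_apply, Pi.smul_apply, smul_eq_mul]
      exact (ha_comb i).symm
    exact segment_subset_convexHull hbmem hdmem hseg
  · obtain ⟨s', hs'⟩ : ∃ x : ℝ, x = ∑ i ∈ N, d i := ⟨_, rfl⟩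
    have hσneg : s' < 0 := by
      rw [hs']
      calc ∑ i ∈ N, d i < ∑ i ∈ N, (0:ℝ) :=
            Finset.sum_lt_sum_of_nonempty hNne (fun i hi => (hNmem i).1 hi)
        _ = 0 := by simp
    obtain ⟨c, hc⟩ : ∃ c : Fin n → Fin n → ℝ,
        c = fun i m => if m ∈ N then (if m = i then s' else 0) else d m := ⟨_, rfl⟩
    have hcim : ∀ i m, c i m = if m ∈ N then (if m = i then s' else 0) else d m := by
      intro i m; rw [hc]
    have hsplitd : ∑ i ∈ N, d i + ∑ i ∈ Finset.univ.filter (fun m => m ∉ N), d i = 1 := by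
      have h := Finset.sum_filter_add_sum_filter_not Finset.univ (fun m => m ∈ N) d
      rw [Finset.filter_mem_eq_inter, Finset.univ_inter] at h
      rw [h]; exact hd_sum
    have hcsum : ∀ i ∈ N, ∑ m, c i m = 1 := by
      intro i hi
      have h := Finset.sum_filter_add_sum_filter_not Finset.univ (fun m => m ∈ N) (c i)
      rw [Finset.filter_mem_eq_inter, Finset.univ_inter] at h
      have h1 : ∑ m ∈ N, c i m = s' := by
        rw [Finset.sum_congr rfl (fun m hm => by rw [hcim i m, if_pos hm]),
          Finset.sum_ite_eq' N i (fun _ => s'), if_pos hi]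
      have h2 : ∑ m ∈ Finset.univ.filter (fun m => m ∉ N), c i m
          = ∑ m ∈ Finset.univ.filter (fun m => m ∉ N), d m := by
        refine Finset.sum_congr rfl (fun m hm => ?_)
        rw [hcim i m, if_neg (Finset.mem_filter.1 hm).2]
      rw [← h, h1, h2]
      rw [← hs'] at hsplitd
      linarith
    have hcQ : ∀ i ∈ N, c i ∈ Qset n k := by
      intro i hi
      refine ⟨⟨?_, hcsum i hi, ?_⟩, ?_⟩
      · intro m
        by_cases hm : m ∈ N
        · by_cases hmi : m = i
          · rw [hcim i m, if_pos hm, if_pos hmi]; linarith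
          · rw [hcim i m, if_pos hm, if_neg hmi]; norm_num
        · rw [hcim i m, if_neg hm]; exact hd_lt1 m
      · intro m m' hm hm'
        have hmi : m = i := by
          by_contra hne
          by_cases hmN : m ∈ N
          · rw [hcim i m, if_pos hmN, if_neg hne] at hm; exact absurd hm (by norm_num)
          · rw [hcim i m, if_neg hmN] at hm; exact absurd hm (not_lt.2 (hdnonneg m hmN))
        have hmi' : m' = i := by
          by_contra hne
          by_cases hmN : m' ∈ N
          · rw [hcim i m', if_pos hmN, if_neg hne] at hm'; exact absurd hm' (by norm_num)
          · rw [hcim i m', if_neg hmN] at hm'; exact absurd hm' (not_lt.2 (hdnonneg m' hmN))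
        rw [hmi, hmi']
      · intro S hS
        have h := Finset.sum_filter_add_sum_filter_not S (fun m => m ∈ N) (c i)
        have h1 : ∑ m ∈ S.filter (fun m => m ∈ N), c i m ≤ 0 := by
          apply Finset.sum_nonpos
          intro m hm
          have hmN := (Finset.mem_filter.1 hm).2
          by_cases hmi : m = i
          · rw [hcim i m, if_pos hmN, if_pos hmi]; linarith
          · rw [hcim i m, if_pos hmN, if_neg hmi]
        have h2 : ∑ m ∈ S.filter (fun m => m ∉ N), c i m
            = ∑ m ∈ S.filter (fun m => m ∉ N), d m := by
          refine Finset.sum_congr rfl (fun m hm => ?_)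
          rw [hcim i m, if_neg (Finset.mem_filter.1 hm).2]
        have hcard_le : ((S.filter (fun m => m ∉ N)).card : ℝ) ≤ (S.card : ℝ) := by
          exact_mod_cast Finset.card_filter_le S _
        rcases (S.filter (fun m => m ∉ N)).eq_empty_or_nonempty with hf | hf
        · have h2' : ∑ m ∈ S.filter (fun m => m ∉ N), d m = 0 := by rw [hf]; simp
          have hc1 : (1:ℝ) ≤ S.card := by exact_mod_cast Finset.card_pos.2 hS
          rw [← h, h2, h2']
          linarith
        · have hQf := hd_q _ hf
          rw [← h, h2]
          linarith
    have hcj : ∀ i, c i j = 0 := by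
      intro i
      rw [hcim i j, if_neg hjN]; exact hd_j
    -- weights
    obtain ⟨W, hW⟩ : ∃ W : Fin n → ℝ,
        W = fun i => if i = j then l else (1-l) * (d i / s') := ⟨_, rfl⟩
    have hWj : W j = l := by rw [hW]; simp
    have hWi : ∀ i, i ≠ j → W i = (1-l) * (d i / s') := by
      intro i hij; rw [hW]; simp [hij]
    obtain ⟨z, hz⟩ : ∃ z : Fin n → (Fin n → ℝ),
        z = fun i => if i = j then b else c i := ⟨_, rfl⟩
    have hzj : z j = b := by rw [hz]; simp
    have hzi : ∀ i, i ≠ j → z i = c i := by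
      intro i hij; rw [hz]; simp [hij]
    have hne_j : ∀ i ∈ N, i ≠ j := fun i hi h => hjN (h ▸ hi)
    have hWsum : ∑ i ∈ insert j N, W i = 1 := by
      rw [Finset.sum_insert hjN, hWj]
      have h1 : ∑ i ∈ N, W i = (1-l) := by
        rw [Finset.sum_congr rfl (fun i hi => hWi i (hne_j i hi)), ← Finset.mul_sum,
          ← Finset.sum_div, ← hs', div_self (ne_of_lt hσneg), mul_one]
      rw [h1]; ring
    have hW0 : ∀ i ∈ insert j N, 0 ≤ W i := by
      intro i hi
      by_cases hij : i = j
      · rw [hij, hWj]; linarith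
      · have hiN : i ∈ N := (Finset.mem_insert.1 hi).resolve_left hij
        rw [hWi i hij]
        have : 0 < d i / s' := div_pos_of_neg_of_neg ((hNmem i).1 hiN) hσneg
        positivity
    have hzmem : ∀ i ∈ insert j N, z i ∈ insert b {c' | c' ∈ Qset n k ∧ 0 ≤ c' j} := by
      intro i hi
      by_cases hij : i = j
      · rw [hij, hzj]; exact Set.mem_insert _ _
      · have hiN : i ∈ N := (Finset.mem_insert.1 hi).resolve_left hij
        rw [hzi i hij]
        exact Set.mem_insert_of_mem _ ⟨hcQ i hiN, le_of_eq (hcj i).symm⟩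
    have hkey : ∑ i ∈ N, (d i / s') • c i = d := by
      funext m
      rw [Finset.sum_apply]
      by_cases hmN : m ∈ N
      · have hterm : ∀ i ∈ N, ((d i / s') • c i) m = if m = i then d m else 0 := by
          intro i _
          rw [Pi.smul_apply, hcim i m, if_pos hmN]
          by_cases hmi : m = i
          · rw [if_pos hmi, if_pos hmi, smul_eq_mul, hmi,
              div_mul_cancel₀ _ (ne_of_lt hσneg)]
          · rw [if_neg hmi, if_neg hmi, smul_eq_mul, mul_zero]
        rw [Finset.sum_congr rfl hterm, Finset.sum_ite_eq N m (fun _ => d m), if_pos hmN]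
      · have hterm : ∀ i ∈ N, ((d i / s') • c i) m = (d i / s') * d m := by
          intro i _
          rw [Pi.smul_apply, hcim i m, if_neg hmN, smul_eq_mul]
        rw [Finset.sum_congr rfl hterm, ← Finset.sum_mul, ← Finset.sum_div, ← hs',
          div_self (ne_of_lt hσneg), one_mul]
    have hcm : ∑ i ∈ insert j N, W i • z i = a := by
      rw [Finset.sum_insert hjN, hWj, hzj]
      have h1 : ∀ i ∈ N, W i • z i = ((1-l) * (d i / s')) • c i := by
        intro i hi
        rw [hWi i (hne_j i hi), hzi i (hne_j i hi)]
      rw [Finset.sum_congr rfl h1]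
      have h2 : ∑ i ∈ N, ((1-l) * (d i / s')) • c i = (1-l) • d := by
        have hs2 : ∑ i ∈ N, ((1-l) * (d i / s')) • c i
            = (1-l) • ∑ i ∈ N, (d i / s') • c i := by
          rw [Finset.smul_sum]
          exact Finset.sum_congr rfl (fun i _ => (smul_smul _ _ _).symm)
        rw [hs2, hkey]
      rw [h2]
      funext i
      simp only [Pi.add_apply, Pi.smul_apply, smul_eq_mul]
      exact (ha_comb i).symm
    have hfinal := Finset.centerMass_mem_convexHull (insert j N) hW0
      (by rw [hWsum]; exact one_pos) hzmem
    rwa [Finset.centerMass_eq_of_sum_1 _ _ hWsum, hcm] at hfinal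

lemma st4_transfer_sum (n : ℕ) (p : ℕ → Prop) [DecidablePred p] {M : Type*} [AddCommMonoid M]
    (g : ℕ → M) :
    ∑ j ∈ Finset.univ.filter (fun j : Fin n => p ↑j), g ↑j
      = ∑ m ∈ (Finset.range n).filter p, g m := by
  rw [Finset.sum_filter, Finset.sum_filter,
    ← Fin.sum_univ_eq_sum_range (fun m => if p m then g m else 0) n]

lemma st4_range_filter_le (n i : ℕ) :
    (Finset.range n).filter (fun m => i + 1 ≤ m) = Finset.Ico (i+1) n := by
  ext m; simp [Finset.mem_Ico, Finset.mem_filter, Finset.mem_range]; omega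

lemma st4_keyclaim (n k : ℕ) (hk : 1 ≤ k) (hkn : 2 * k < n) (u : Fin n → ℝ) {a : Fin n → ℝ}
    (ha : a ∈ Qset n k) : ∃ b ∈ Pset n k, ∑ i, u i * a i ≤ ∑ i, u i * b i := by
  classical
  obtain ⟨⟨hlt1, hsum, _hneg⟩, hQ⟩ := ha
  have hkR : (1:ℝ) ≤ k := by exact_mod_cast hk
  have hknR : 2*(k:ℝ) + 1 ≤ n := by exact_mod_cast hkn
  have hn3 : 3 ≤ n := by omega
  have hnpos : 0 < n := by omega
  obtain ⟨σ, hσdef⟩ : ∃ e : Equiv.Perm (Fin n), e = Tuple.sort u := ⟨_, rfl⟩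
  have hmono : Monotone (u ∘ σ) := by rw [hσdef]; exact Tuple.monotone_sort u
  -- sorted values of a
  obtain ⟨αs, hαs⟩ : ∃ f : ℕ → ℝ, f = fun m => if h : m < n then a (σ ⟨m, h⟩) else 0 :=
    ⟨_, rfl⟩
  have hαs_eq : ∀ m : Fin n, αs ↑m = a (σ m) := by
    intro m; rw [hαs]; simp [m.isLt]
  have hαs_lt1 : ∀ m, m < n → αs m < 1 := by
    intro m hm; rw [hαs]; simp only [dif_pos hm]; exact hlt1 _
  have hαs_sum : ∑ m ∈ Finset.range n, αs m = 1 := by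
    rw [← Fin.sum_univ_eq_sum_range αs n]
    rw [Finset.sum_congr rfl (fun m _ => hαs_eq m), Equiv.sum_comp σ a]
    exact hsum
  -- upper bound for tail sums from Qset
  have htail_bound : ∀ i : ℕ, i + 1 < n →
      ∑ m ∈ Finset.Ico (i+1) n, αs m < ((n:ℝ) - 2*k + ((n:ℝ) - (i+1))) / 2 := by
    intro i hi
    have h1 : ∑ j ∈ Finset.univ.filter (fun j : Fin n => i + 1 ≤ ↑j), αs ↑j
        = ∑ m ∈ Finset.Ico (i+1) n, αs m := by
      rw [st4_transfer_sum n (fun m => i + 1 ≤ m) αs, st4_range_filter_le]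
    -- the Finset in Fin n
    have h2 : ∑ j ∈ Finset.univ.filter (fun j : Fin n => i + 1 ≤ ↑j), αs ↑j
        = ∑ x ∈ (Finset.univ.filter (fun j : Fin n => i + 1 ≤ ↑j)).image σ, a x := by
      rw [Finset.sum_image (fun x _ y _ h => σ.injective h)]
      exact Finset.sum_congr rfl (fun m _ => hαs_eq m)
    have hcard : (((Finset.univ.filter (fun j : Fin n => i + 1 ≤ ↑j)).image σ).card : ℝ)
        = (n:ℝ) - (i+1) := by
      rw [Finset.card_image_of_injective _ σ.injective]
      have : (Finset.univ.filter (fun j : Fin n => i + 1 ≤ ↑j)).card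
          = (Finset.Ico (i+1) n).card := by
        rw [Finset.card_eq_sum_ones, Finset.card_eq_sum_ones,
          st4_transfer_sum n (fun m => i + 1 ≤ m) (fun _ => 1), st4_range_filter_le]
      rw [this, Nat.card_Ico, Nat.cast_sub (by omega : i + 1 ≤ n)]
      push_cast; ring
    have hne : ((Finset.univ.filter (fun j : Fin n => i + 1 ≤ ↑j)).image σ).Nonempty := by
      refine ⟨σ ⟨i+1, hi⟩, Finset.mem_image_of_mem σ ?_⟩
      simp
    have := hQ _ hne
    rw [hcard] at this
    rw [← h1, h2]
    exact this
  have htail_each : ∀ i : ℕ, i + 1 < n →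
      ∑ m ∈ Finset.Ico (i+1) n, αs m < (n:ℝ) - (i+1) := by
    intro i hi
    have hne : (Finset.Ico (i+1) n).Nonempty := by rw [Finset.nonempty_Ico]; omega
    calc ∑ m ∈ Finset.Ico (i+1) n, αs m < ∑ m ∈ Finset.Ico (i+1) n, (1:ℝ) :=
          Finset.sum_lt_sum_of_nonempty hne
            (fun m hm => hαs_lt1 m (Finset.mem_Ico.1 hm).2)
      _ = ((Finset.Ico (i+1) n).card : ℝ) := by rw [Finset.sum_const, nsmul_eq_mul, mul_one]
      _ = (n:ℝ) - (i+1) := by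
          rw [Nat.card_Ico, Nat.cast_sub (by omega : i + 1 ≤ n)]; push_cast; ring
  -- partial sums of αs
  have hA_split : ∀ i : ℕ, i + 1 ≤ n →
      ∑ m ∈ Finset.range (i+1), αs m = 1 - ∑ m ∈ Finset.Ico (i+1) n, αs m := by
    intro i hi
    have := Finset.sum_range_add_sum_Ico αs hi
    linarith [hαs_sum, this]
  -- lower bounds for A i
  have hA_low : ∀ i : ℕ, i + 1 < n → i < 2*k →
      ((k:ℝ) - n + 3/2) + i/2 < ∑ m ∈ Finset.range (i+1), αs m := by
    intro i hi _
    rw [hA_split i (le_of_lt hi)]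
    have := htail_bound i hi
    linarith
  have hA_high : ∀ i : ℕ, i + 1 < n →
      (i:ℝ) + 2 - n < ∑ m ∈ Finset.range (i+1), αs m := by
    intro i hi
    rw [hA_split i (le_of_lt hi)]
    have := htail_each i hi
    linarith
  -- slack and epsilon
  obtain ⟨L, hL⟩ : ∃ f : ℕ → ℝ, f = fun i =>
      if i < 2*k then ((k:ℝ) - n + 3/2) + i/2 else (i:ℝ) + 2 - n := ⟨_, rfl⟩
  have hslack : ∀ i ∈ Finset.range (n-1), 0 < ∑ m ∈ Finset.range (i+1), αs m - L i := by
    intro i hi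
    have hi' : i + 1 < n := by have := Finset.mem_range.1 hi; omega
    rw [hL]
    by_cases h2k : i < 2*k
    · simp only [if_pos h2k]; linarith [hA_low i hi' h2k]
    · simp only [if_neg h2k]; linarith [hA_high i hi']
  have hrange_ne : (Finset.range (n-1)).Nonempty := by
    rw [Finset.nonempty_range_iff]; omega
  have himg_ne : ((Finset.range (n-1)).image
      (fun i => ∑ m ∈ Finset.range (i+1), αs m - L i)).Nonempty :=
    hrange_ne.image _
  obtain ⟨δ, hδdef⟩ : ∃ x : ℝ, x = ((Finset.range (n-1)).image
      (fun i => ∑ m ∈ Finset.range (i+1), αs m - L i)).min' himg_ne := ⟨_, rfl⟩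
  have hδpos : 0 < δ := by
    rw [hδdef]
    obtain ⟨i, hi, hival⟩ := Finset.mem_image.1 (Finset.min'_mem _ himg_ne)
    rw [← hival]
    exact hslack i hi
  have hδle : ∀ i ∈ Finset.range (n-1),
      δ ≤ ∑ m ∈ Finset.range (i+1), αs m - L i := by
    intro i hi
    rw [hδdef]
    exact Finset.min'_le _ _ (Finset.mem_image_of_mem _ hi)
  obtain ⟨ε, hεdef⟩ : ∃ x : ℝ, x = min (δ / (n:ℝ)^2) (1/(2*(n:ℝ))) := ⟨_, rfl⟩
  have hn2pos : (0:ℝ) < (n:ℝ)^2 := by positivity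
  have hεpos : 0 < ε := by
    rw [hεdef]
    exact lt_min (div_pos hδpos hn2pos) (by positivity)
  have hε1 : (n:ℝ)^2 * ε ≤ δ := by
    have h := min_le_left (δ / (n:ℝ)^2) (1/(2*(n:ℝ)))
    rw [← hεdef] at h
    rw [← le_div_iff₀' hn2pos]
    exact h
  have hε2 : ε ≤ 1/(2*(n:ℝ)) := by
    rw [hεdef]; exact min_le_right _ _
  have hεsmall : (n:ℝ) * ε ≤ 1/2 := by
    have hnR : (0:ℝ) < n := by positivity
    calc (n:ℝ) * ε ≤ (n:ℝ) * (1/(2*(n:ℝ))) :=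
          mul_le_mul_of_nonneg_left hε2 hnR.le
      _ = 1/2 := by field_simp
  have hc2pos : (1:ℝ) ≤ (n:ℝ) - 2*k := by linarith
  have hc2len : (n:ℝ) - 2*k ≤ n := by linarith
  have hden : (0:ℝ) < 2*(2*(k:ℝ)-1) := by linarith
  -- the ideal corner values
  obtain ⟨val, hval⟩ : ∃ f : ℕ → ℝ, f = fun m =>
      if m = 0 then ((k:ℝ) - n + 3/2) + ((n:ℝ)-2*k)*ε/2
      else if m < 2*k then 1/2 + ((n:ℝ)-2*k)*ε/(2*(2*(k:ℝ)-1))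
      else 1 - ε := ⟨_, rfl⟩
  have hval0 : val 0 = ((k:ℝ) - n + 3/2) + ((n:ℝ)-2*k)*ε/2 := by rw [hval]; norm_num
  have hvalmid : ∀ m, m ≠ 0 → m < 2*k →
      val m = 1/2 + ((n:ℝ)-2*k)*ε/(2*(2*(k:ℝ)-1)) := by
    intro m h0 h2; rw [hval]; simp [h0, h2]
  have hvaltop : ∀ m, ¬ m < 2*k → val m = 1 - ε := by
    intro m h2
    have h0 : m ≠ 0 := by omega
    rw [hval]; simp [h0, h2]
  -- midvalue and topvalue bounds
  have hmid_pos : 0 < ((n:ℝ)-2*k)*ε/(2*(2*(k:ℝ)-1)) := by positivity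
  have hmid_le : ((n:ℝ)-2*k)*ε/(2*(2*(k:ℝ)-1)) ≤ 1/4 := by
    rw [div_le_iff₀ hden]
    nlinarith
  have hc2ε : ((n:ℝ)-2*k)*ε/2 ≤ 1/4 := by nlinarith
  have hc2εpos : 0 < ((n:ℝ)-2*k)*ε/2 := by positivity
  have hεlt : ε < 1/2 := by
    have : (3:ℝ) ≤ n := by exact_mod_cast hn3
    nlinarith
  -- partial sums of val
  have hB_low : ∀ i : ℕ, i < 2*k →
      ∑ m ∈ Finset.range (i+1), val m
        = (((k:ℝ) - n + 3/2) + ((n:ℝ)-2*k)*ε/2)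
          + i * (1/2 + ((n:ℝ)-2*k)*ε/(2*(2*(k:ℝ)-1))) := by
    intro i h2k
    rw [Finset.sum_range_succ']
    have hmid : ∀ m ∈ Finset.range i, val (m+1)
        = 1/2 + ((n:ℝ)-2*k)*ε/(2*(2*(k:ℝ)-1)) := by
      intro m hm
      exact hvalmid (m+1) (by omega) (by have := Finset.mem_range.1 hm; omega)
    rw [Finset.sum_congr rfl hmid, Finset.sum_const, Finset.card_range, nsmul_eq_mul, hval0]
    ring
  have hB_high : ∀ i : ℕ, 2*k ≤ i →
      ∑ m ∈ Finset.range (i+1), val m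
        = (((k:ℝ) - n + 3/2) + ((n:ℝ)-2*k)*ε/2)
          + (2*(k:ℝ)-1) * (1/2 + ((n:ℝ)-2*k)*ε/(2*(2*(k:ℝ)-1)))
          + ((i:ℝ)+1-2*k) * (1 - ε) := by
    intro i h2k
    rw [Finset.sum_range_succ']
    have hsplit : ∑ m ∈ Finset.range i, val (m+1)
        = ∑ m ∈ Finset.Ico 0 (2*k-1), val (m+1) + ∑ m ∈ Finset.Ico (2*k-1) i, val (m+1) := by
      rw [Finset.sum_Ico_consecutive _ (Nat.zero_le _) (by omega : 2*k-1 ≤ i),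
        ← Finset.range_eq_Ico]
    rw [hsplit]
    have hmid : ∀ m ∈ Finset.Ico 0 (2*k-1), val (m+1)
        = 1/2 + ((n:ℝ)-2*k)*ε/(2*(2*(k:ℝ)-1)) := by
      intro m hm
      have := (Finset.mem_Ico.1 hm).2
      exact hvalmid (m+1) (by omega) (by omega)
    have htop : ∀ m ∈ Finset.Ico (2*k-1) i, val (m+1) = 1 - ε := by
      intro m hm
      have := (Finset.mem_Ico.1 hm).1
      exact hvaltop (m+1) (by omega)
    rw [Finset.sum_congr rfl hmid, Finset.sum_congr rfl htop, Finset.sum_const,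
      Finset.sum_const, Nat.card_Ico, Nat.card_Ico, Nat.sub_zero, nsmul_eq_mul, nsmul_eq_mul,
      hval0, Nat.cast_sub (by omega : 2*k - 1 ≤ i), Nat.cast_sub (by omega : 1 ≤ 2*k)]
    push_cast
    ring
  have hval_sum : ∑ m ∈ Finset.range n, val m = 1 := by
    have hn1 : n - 1 + 1 = n := by omega
    have := hB_high (n-1) (by omega)
    rw [hn1] at this
    rw [this, Nat.cast_sub (by omega : 1 ≤ n)]
    have hne : (2*(k:ℝ)-1) ≠ 0 := by linarith
    have hh : (2*(k:ℝ)-1) * (((n:ℝ)-2*k)*ε/(2*(2*(k:ℝ)-1))) = ((n:ℝ)-2*k)*ε/2 := by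
      rw [mul_div_assoc', mul_comm (2*(k:ℝ)-1) (((n:ℝ)-2*k)*ε), mul_div_mul_right _ _ hne]
    rw [mul_add, hh]
    ring
  -- partial sums bounded
  have hD : ∀ i ∈ Finset.range (n-1),
      ∑ m ∈ Finset.range (i+1), (val m - αs m) ≤ 0 := by
    intro i hi
    have hi' : i + 1 < n := by have := Finset.mem_range.1 hi; omega
    rw [Finset.sum_sub_distrib]
    have hδi := hδle i hi
    by_cases h2k : i < 2*k
    · have hB := hB_low i h2k
      have hLi : L i = ((k:ℝ) - n + 3/2) + i/2 := by rw [hL]; simp [h2k]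
      -- coefficient bound
      have hiR : (i:ℝ) ≤ 2*(k:ℝ) - 1 := by
        have : (i:ℝ) + 1 ≤ 2*(k:ℝ) := by exact_mod_cast h2k
        linarith
      have hcoef : ((n:ℝ)-2*k)*ε/2 + i * (((n:ℝ)-2*k)*ε/(2*(2*(k:ℝ)-1))) ≤ (n:ℝ)^2 * ε := by
        have h1 : (i:ℝ) * (((n:ℝ)-2*k)*ε/(2*(2*(k:ℝ)-1)))
            ≤ (2*(k:ℝ)-1) * (((n:ℝ)-2*k)*ε/(2*(2*(k:ℝ)-1))) :=
          mul_le_mul_of_nonneg_right hiR hmid_pos.le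
        have h2 : (2*(k:ℝ)-1) * (((n:ℝ)-2*k)*ε/(2*(2*(k:ℝ)-1))) = ((n:ℝ)-2*k)*ε/2 := by
          have hne : (2*(k:ℝ)-1) ≠ 0 := by linarith
          rw [mul_div_assoc', mul_comm (2*(k:ℝ)-1) (((n:ℝ)-2*k)*ε), mul_div_mul_right _ _ hne]
        have h3 : ((n:ℝ)-2*k)*ε ≤ (n:ℝ)^2 * ε := by
          have : (n:ℝ) ≤ (n:ℝ)^2 := by nlinarith
          nlinarith
        nlinarith
      rw [hB]
      rw [hLi] at hδi
      nlinarith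
    · have hB := hB_high i (by omega)
      have hLi : L i = (i:ℝ) + 2 - n := by rw [hL]; simp [h2k]
      have hcoef : ((n:ℝ)-2*k)*ε/2 + (2*(k:ℝ)-1) * (((n:ℝ)-2*k)*ε/(2*(2*(k:ℝ)-1)))
          - ((i:ℝ)+1-2*k)*ε ≤ (n:ℝ)^2 * ε := by
        have h2 : (2*(k:ℝ)-1) * (((n:ℝ)-2*k)*ε/(2*(2*(k:ℝ)-1))) = ((n:ℝ)-2*k)*ε/2 := by
          have hne : (2*(k:ℝ)-1) ≠ 0 := by linarith
          rw [mul_div_assoc', mul_comm (2*(k:ℝ)-1) (((n:ℝ)-2*k)*ε), mul_div_mul_right _ _ hne]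
        have hik : 2*(k:ℝ) ≤ (i:ℝ) := by exact_mod_cast (by omega : 2*k ≤ i)
        have h3 : ((n:ℝ)-2*k)*ε ≤ (n:ℝ)^2 * ε := by
          have : (n:ℝ) ≤ (n:ℝ)^2 := by nlinarith
          nlinarith
        nlinarith
      rw [hB]
      rw [hLi] at hδi
      nlinarith
  -- sorted u values
  obtain ⟨vs, hvs⟩ : ∃ f : ℕ → ℝ, f = fun m =>
      if h : m < n then u (σ ⟨m, h⟩) else 0 := ⟨_, rfl⟩
  have hvs_eq : ∀ m : Fin n, vs ↑m = u (σ m) := by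
    intro m; rw [hvs]; simp [m.isLt]
  have hvs_mono : ∀ i : ℕ, i + 1 < n → vs i ≤ vs (i+1) := by
    intro i hi
    have h1 : i < n := by omega
    rw [hvs]
    simp only [dif_pos hi, dif_pos h1]
    exact hmono (by simp [Fin.mk_le_mk] : (⟨i, h1⟩ : Fin n) ≤ ⟨i+1, hi⟩)
  -- Abel summation
  have habel := Finset.sum_range_by_parts vs (fun m => val m - αs m) n
  simp only [smul_eq_mul] at habel
  have htotal : ∑ m ∈ Finset.range n, (val m - αs m) = 0 := by
    rw [Finset.sum_sub_distrib, hval_sum, hαs_sum]; ring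
  have hmain : 0 ≤ ∑ m ∈ Finset.range n, vs m * (val m - αs m) := by
    rw [habel, htotal, mul_zero, zero_sub, le_neg, neg_zero]
    apply Finset.sum_nonpos
    intro i hi
    have hi' : i + 1 < n := by have := Finset.mem_range.1 hi; omega
    exact mul_nonpos_of_nonneg_of_nonpos
      (by linarith [hvs_mono i hi']) (hD i hi)
  -- build b
  obtain ⟨b, hb⟩ : ∃ b : Fin n → ℝ, b = fun x => val ((σ.symm x : ℕ)) := ⟨_, rfl⟩
  have hbσ : ∀ m : Fin n, b (σ m) = val ↑m := by
    intro m; rw [hb]; simp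
  have hbsum : ∑ x, b x = 1 := by
    rw [← Equiv.sum_comp σ b, Finset.sum_congr rfl (fun m _ => hbσ m),
      Fin.sum_univ_eq_sum_range val n]
    exact hval_sum
  -- translate the main inequality
  have htrans : ∑ x, u x * (b x - a x) = ∑ m ∈ Finset.range n, vs m * (val m - αs m) := by
    rw [← Equiv.sum_comp σ (fun x => u x * (b x - a x)),
      ← Fin.sum_univ_eq_sum_range (fun m => vs m * (val m - αs m)) n]
    refine Finset.sum_congr rfl (fun m _ => ?_)
    rw [hbσ m, hvs_eq m, hαs_eq m]
  -- membership in Pset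
  have hj0lt : (0:ℕ) < n := hnpos
  have hT' : (k:ℝ) - n + 3/2 ≤ -1/2 := by linarith
  have hval0neg : val 0 < 0 := by rw [hval0]; linarith
  have hval0gt : (k:ℝ) - n + 3/2 < val 0 := by rw [hval0]; linarith
  have hval0lt : val 0 < (k:ℝ) - n + 2 := by rw [hval0]; linarith
  have hvalm : ∀ m, m ≠ 0 → 1/2 < val m ∧ val m < 1 := by
    intro m h0
    by_cases h2 : m < 2*k
    · rw [hvalmid m h0 h2]
      constructor <;> linarith
    · rw [hvaltop m h2]
      constructor <;> linarith
  have hbmem : ∀ x, x ≠ σ ⟨0, hj0lt⟩ → 1/2 < b x ∧ b x < 1 := by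
    intro x hx
    rw [hb]
    apply hvalm
    intro h0
    apply hx
    have : σ.symm x = ⟨0, hj0lt⟩ := Fin.ext h0
    rw [← this, Equiv.apply_symm_apply]
  have hbj : b (σ ⟨0, hj0lt⟩) = val 0 := by
    rw [hbσ]
  have hbP : b ∈ Pset n k := by
    refine ⟨⟨?_, hbsum, ?_⟩, σ ⟨0, hj0lt⟩, by rw [hbj]; exact hval0neg,
      fun i hi => (hbmem i hi).1, by rw [hbj]; exact hval0gt, by rw [hbj]; exact hval0lt⟩
    · intro x
      by_cases hx : x = σ ⟨0, hj0lt⟩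
      · rw [hx, hbj]; linarith
      · exact (hbmem x hx).2
    · intro x y hx hy
      have hx0 : x = σ ⟨0, hj0lt⟩ := by
        by_contra h
        exact absurd hx (not_lt.2 (by linarith [(hbmem x h).1]))
      have hy0 : y = σ ⟨0, hj0lt⟩ := by
        by_contra h
        exact absurd hy (not_lt.2 (by linarith [(hbmem y h).1]))
      rw [hx0, hy0]
  refine ⟨b, hbP, ?_⟩
  have : 0 ≤ ∑ x, u x * (b x - a x) := by rw [htrans]; exact hmain
  have hexp : ∑ x, u x * (b x - a x) = ∑ x, u x * b x - ∑ x, u x * a x := by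
    rw [← Finset.sum_sub_distrib]
    exact Finset.sum_congr rfl (fun x _ => by ring)
  linarith [hexp ▸ this]

lemma st4_part1 (n k : ℕ) (hk : 1 ≤ k) (hkn : 2 * k < n) :
    Qset n k ⊆ convexHull ℝ (Pset n k) := by
  classical
  intro α hα
  by_contra hnot
  have hkR : (1:ℝ) ≤ k := by exact_mod_cast hk
  have hknR : 2*(k:ℝ) + 1 ≤ n := by exact_mod_cast hkn
  have hn3 : 3 ≤ n := by omega
  have hnR : (0:ℝ) < n := by positivity
  have hT12 : (k:ℝ) - n + 2 ≤ 0 := by linarith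
  obtain ⟨φ, hφ⟩ : ∃ f : (Fin n → ℝ) → (Fin n → ℝ),
      f = fun x : Fin n → ℝ => fun i : Fin n => x i - (∑ m, x m - 1)/n := ⟨_, rfl⟩
  have hφi : ∀ x i, φ x i = x i - (∑ m, x m - 1)/n := by intro x i; rw [hφ]
  have hcont : ∀ i : Fin n, Continuous (fun x : Fin n → ℝ => φ x i) := by
    intro i
    have : (fun x : Fin n → ℝ => φ x i)
        = fun x : Fin n → ℝ => x i - (∑ m, x m - 1)/n := by
      funext x; exact hφi x i
    rw [this]
    exact (continuous_apply i).sub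
      (((continuous_finset_sum Finset.univ (fun m _ => continuous_apply m)).sub
        continuous_const).div_const _)
  obtain ⟨U, hU⟩ : ∃ U : Fin n → Set (Fin n → ℝ), U = fun j => ⋂ i : Fin n,
      (fun x => φ x i) ⁻¹' (if i = j then Set.Ioo ((k:ℝ)-n+3/2) ((k:ℝ)-n+2)
        else Set.Ioo (1/2 : ℝ) 1) := ⟨_, rfl⟩
  have hUmem : ∀ j x, x ∈ U j ↔ ∀ i : Fin n,
      φ x i ∈ (if i = j then Set.Ioo ((k:ℝ)-n+3/2) ((k:ℝ)-n+2) else Set.Ioo (1/2:ℝ) 1) := by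
    intro j x; rw [hU]; simp only [Set.mem_iInter, Set.mem_preimage]
  have hUopen : IsOpen (⋃ j, U j) := by
    refine isOpen_iUnion (fun j => ?_)
    rw [hU]
    refine isOpen_iInter_of_finite (fun i => ?_)
    refine IsOpen.preimage (hcont i) ?_
    by_cases h : i = j <;> simp [h, isOpen_Ioo]
  -- P ⊆ U
  have hPsubU : Pset n k ⊆ ⋃ j, U j := by
    rintro p ⟨⟨hlt1, hsum, _⟩, j, hjneg, hgt, hT1, hT2⟩
    refine Set.mem_iUnion.2 ⟨j, (hUmem j p).2 (fun i => ?_)⟩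
    have hφp : ∀ i, φ p i = p i := by
      intro i; rw [hφi, hsum]; simp
    rw [hφp]
    by_cases h : i = j
    · rw [if_pos h, h]; exact ⟨hT1, hT2⟩
    · rw [if_neg h]; exact ⟨hgt i h, hlt1 i⟩
  -- shifted point lands in P
  have hUP : ∀ x, x ∈ (⋃ j, U j) → φ x ∈ Pset n k := by
    intro x hx
    obtain ⟨j, hj⟩ := Set.mem_iUnion.1 hx
    have hmem := (hUmem j x).1 hj
    have hj' := hmem j
    rw [if_pos rfl] at hj'
    have hother : ∀ i, i ≠ j → φ x i ∈ Set.Ioo (1/2:ℝ) 1 := by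
      intro i hi
      have := hmem i
      rwa [if_neg hi] at this
    have hφsum : ∑ i, φ x i = 1 := by
      have : ∑ i, φ x i = ∑ i, x i - n * ((∑ m, x m - 1)/n) := by
        rw [Finset.sum_congr rfl (fun i _ => hφi x i), Finset.sum_sub_distrib,
          Finset.sum_const, Finset.card_univ, Fintype.card_fin, nsmul_eq_mul]
      rw [this, mul_div_cancel₀ _ (ne_of_gt hnR)]
      ring
    have hlt1 : ∀ i, φ x i < 1 := by
      intro i
      by_cases h : i = j
      · rw [h]; have := hj'.2; linarith
      · exact (hother i h).2
    refine ⟨⟨hlt1, hφsum, ?_⟩, j, by have := hj'.2; linarith, fun i hi => (hother i hi).1,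
      hj'.1, hj'.2⟩
    · intro i i' hi hi'
      have h1 : i = j := by
        by_contra h
        exact absurd hi (not_lt.2 (by linarith [(hother i h).1]))
      have h2 : i' = j := by
        by_contra h
        exact absurd hi' (not_lt.2 (by linarith [(hother i' h).1]))
      rw [h1, h2]
  -- hull of U ∩ {sum = 1} lands in hull P
  have hHull : α ∈ convexHull ℝ (⋃ j, U j) → α ∈ convexHull ℝ (Pset n k) := by
    intro hmem
    rw [_root_.convexHull_eq] at hmem
    obtain ⟨ι, t, w, z, hw0, hw1, hz, hcm⟩ := hmem
    have hcm' : ∑ q ∈ t, w q • z q = α := by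
      rw [← Finset.centerMass_eq_of_sum_1 _ _ hw1]; exact hcm
    have hαsum : ∑ m, α m = 1 := hα.1.2.1
    have hswap : ∑ m, α m = ∑ q ∈ t, w q * (∑ m, z q m) := by
      rw [← hcm']
      have h1 : ∀ m : Fin n, (∑ q ∈ t, w q • z q) m = ∑ q ∈ t, w q * z q m := by
        intro m
        rw [Finset.sum_apply]
        exact Finset.sum_congr rfl (fun q _ => by rw [Pi.smul_apply, smul_eq_mul])
      rw [Finset.sum_congr rfl (fun m (_ : m ∈ Finset.univ) => h1 m), Finset.sum_comm]
      exact Finset.sum_congr rfl (fun q _ => (Finset.mul_sum _ _ _).symm)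
    have hs0 : ∑ q ∈ t, w q * ((∑ m, z q m - 1)/n) = 0 := by
      have hexpand : ∑ q ∈ t, w q * (∑ m, z q m)
          = ∑ q ∈ t, (w q * n * ((∑ m, z q m - 1)/n) + w q) := by
        refine Finset.sum_congr rfl (fun q _ => ?_)
        field_simp
        ring
      rw [hexpand] at hswap
      rw [Finset.sum_add_distrib, hw1] at hswap
      have : ∑ q ∈ t, w q * (n:ℝ) * ((∑ m, z q m - 1)/n)
          = (n:ℝ) * ∑ q ∈ t, w q * ((∑ m, z q m - 1)/n) := by
        rw [Finset.mul_sum]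
        exact Finset.sum_congr rfl (fun q _ => by ring)
      rw [this] at hswap
      rw [hαsum] at hswap
      have hn0 : (n:ℝ) ≠ 0 := ne_of_gt hnR
      nlinarith [hswap]
    have hcomb : ∑ q ∈ t, w q • φ (z q) = α := by
      funext m
      rw [Finset.sum_apply]
      have h1 : ∀ q ∈ t, (w q • φ (z q)) m = w q * z q m - w q * ((∑ i, z q i - 1)/n) := by
        intro q _
        rw [Pi.smul_apply, smul_eq_mul, hφi]
        ring
      rw [Finset.sum_congr rfl h1, Finset.sum_sub_distrib, ← hcm']
      rw [hs0]
      rw [Finset.sum_apply]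
      simp only [Pi.smul_apply, smul_eq_mul]
      ring
    have hmemP : ∀ q ∈ t, φ (z q) ∈ Pset n k := fun q hq => hUP (z q) (hz q hq)
    have := Finset.centerMass_mem_convexHull t hw0 (by rw [hw1]; exact one_pos) hmemP
    rwa [Finset.centerMass_eq_of_sum_1 _ _ hw1, hcomb] at this
  have hnotU : α ∉ convexHull ℝ (⋃ j, U j) := fun h => hnot (hHull h)
  obtain ⟨f, hf⟩ := geometric_hahn_banach_open_point
    (convex_convexHull ℝ _) (isOpen_convexHull_aux hUopen) hnotU
  obtain ⟨u, hu⟩ : ∃ u : Fin n → ℝ, u = fun i => f (fun j => if i = j then 1 else 0) :=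
    ⟨_, rfl⟩
  have hfeval : ∀ x : Fin n → ℝ, f x = ∑ i, u i * x i := by
    intro x
    have := LinearMap.pi_apply_eq_sum_univ (f : (Fin n → ℝ) →ₗ[ℝ] ℝ) x
    rw [ContinuousLinearMap.coe_coe] at this
    rw [this, hu]
    exact Finset.sum_congr rfl (fun i _ => by rw [smul_eq_mul]; ring)
  obtain ⟨b, hbP, hble⟩ := st4_keyclaim n k hk hkn u hα
  have h1 : f b < f α := hf b (subset_convexHull ℝ _ (hPsubU hbP))
  have h2 : f α ≤ f b := by
    rw [hfeval, hfeval]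
    exact hble
  linarith

/-- Lemma 2.5 (`convexhull`): Q lies in the convex hull of P, Q contains
all good tuples, and the refined convexity statement for bad tuples in Q. -/
theorem statement4 (n k : ℕ) (hn : 2 ≤ n) (hk : 1 ≤ k) (hkn : 2 * k < n) :
    Qset n k ⊆ convexHull ℝ (Pset n k) ∧
    (∀ a : Fin n → ℝ, Admissible n a → (∀ i, 0 ≤ a i) → a ∈ Qset n k) ∧
    (∀ a ∈ Qset n k, ∀ j : Fin n, a j < 0 →
      ∃ b ∈ Pset n k, b j < 0 ∧ (∀ i, i ≠ j → a i < b i) ∧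
        a ∈ convexHull ℝ (insert b {c ∈ Qset n k | 0 ≤ c j})) := by
  exact ⟨st4_part1 n k hk hkn, fun a ha hpos => st4_good_mem_Q n k hk hkn a ha hpos,
    fun a ha j hj => st4_part3 n k hk hkn ha j hj⟩
end
end
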